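/- Let ρ₁ and ρ₂ be invertible density matrices of dimension d and define √(ρ₁ρ₂) := ρ₁^{1/2} (ρ₁^{1/2} ρ₂ ρ₁^{1/2})^{1/2} ρ₁^{−1/2}. Then the operator norm of ρ₁^{−1/2} · √(ρ₁ρ₂) · ρ₂^{−1/2} equals 1. -/

import Mathlib

open scoped Classical

open Matrix ComplexOrder

/-- The positive semidefinite square root of a matrix: the unique PSD square root
when the matrix is PSD, and `0` otherwise. -/
noncomputable def msqrt {n : Type*} [Fintype n] [DecidableEq n]
    (A : Matrix n n ℂ) : Matrix n n ℂ :=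
  if h : A.PosSemidef then
    (h.1.eigenvectorUnitary : Matrix n n ℂ) * diagonal ((↑) ∘ Real.sqrt ∘ h.1.eigenvalues) *
      (star h.1.eigenvectorUnitary : Matrix n n ℂ)
  else 0

/-- `√(ρ₁ρ₂) := ρ₁^{1/2} (ρ₁^{1/2} ρ₂ ρ₁^{1/2})^{1/2} ρ₁^{−1/2}`, the square root of the
product of two (invertible) positive semidefinite matrices. -/
noncomputable def sqrtProd {n : Type*} [Fintype n] [DecidableEq n]
    (ρ₁ ρ₂ : Matrix n n ℂ) : Matrix n n ℂ :=
  msqrt ρ₁ * msqrt (msqrt ρ₁ * ρ₂ * msqrt ρ₁) * (msqrt ρ₁)⁻¹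

/-!
With `T = ρ₁^{1/2}`, `R = ρ₂^{1/2}` and `S = (T R² T)^{1/2}`, the matrix in question is
`A = S T⁻¹ R⁻¹`, and `Aᴴ A = R⁻¹ T⁻¹ S² T⁻¹ R⁻¹ = R⁻¹ T⁻¹ (T R² T) T⁻¹ R⁻¹ = 1`. So `A` is
unitary, and a unitary operator on a nonzero Hilbert space has norm one.
-/

open scoped MatrixOrder

namespace Matrix

theorem isUnit_det_sqrt {n 𝕜 : Type*} [Fintype n] [DecidableEq n] [RCLike 𝕜]
    {A : Matrix n n 𝕜} (hA : A.PosSemidef) (hdet : IsUnit A.det) : IsUnit (CFC.sqrt A).det := by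
  rwa [← isUnit_iff_isUnit_det, CFC.isUnit_sqrt_iff A hA.nonneg, isUnit_iff_isUnit_det]

theorem mem_unitaryGroup_of_mul_self_eq {n α : Type*} [Fintype n] [DecidableEq n]
    [CommRing α] [StarRing α] {S T R : Matrix n n α} (hS : S.IsHermitian) (hT : T.IsHermitian)
    (hR : R.IsHermitian) (hTdet : IsUnit T.det) (hRdet : IsUnit R.det)
    (h : S * S = T * (R * R) * T) : S * T⁻¹ * R⁻¹ ∈ unitaryGroup n α := by
  rw [mem_unitaryGroup_iff', star_eq_conjTranspose, conjTranspose_mul, conjTranspose_mul,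
    hS.eq, conjTranspose_nonsing_inv, conjTranspose_nonsing_inv, hT.eq, hR.eq]
  calc R⁻¹ * (T⁻¹ * S) * (S * T⁻¹ * R⁻¹) = R⁻¹ * T⁻¹ * (S * S) * T⁻¹ * R⁻¹ := by noncomm_ring
    _ = R⁻¹ * (T⁻¹ * T) * (R * R) * (T * T⁻¹) * R⁻¹ := by rw [h]; noncomm_ring
    _ = 1 := by
      rw [nonsing_inv_mul _ hTdet, mul_nonsing_inv _ hTdet, mul_one, mul_one, ← mul_assoc,
        nonsing_inv_mul _ hRdet, one_mul, mul_nonsing_inv _ hRdet]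

theorem norm_toEuclideanCLM_of_mem_unitaryGroup {n 𝕜 : Type*} [Fintype n] [DecidableEq n]
    [Nonempty n] [RCLike 𝕜] {U : Matrix n n 𝕜} (hU : U ∈ unitaryGroup n 𝕜) :
    ‖toEuclideanCLM (𝕜 := 𝕜) U‖ = 1 :=
  CStarRing.norm_of_mem_unitary (Unitary.map_mem _ hU)

end Matrix

theorem msqrt_eq_sqrt {n : Type*} [Fintype n] [DecidableEq n] {A : Matrix n n ℂ}
    (hA : A.PosSemidef) : msqrt A = CFC.sqrt A := by
  rw [msqrt, dif_pos hA, CFC.sqrt_eq_cfc, cfc_nnreal_eq_real _ A, hA.1.cfc_eq,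
    IsHermitian.cfc, Unitary.conjStarAlgAut_apply]
  congr 3
  funext i
  simp [hA.eigenvalues_nonneg i]

theorem posSemidef_sqrt_mul_mul_sqrt {n : Type*} [Fintype n] {ρ₁ ρ₂ : Matrix n n ℂ}
    (h₂ : ρ₂.PosSemidef) : (CFC.sqrt ρ₁ * ρ₂ * CFC.sqrt ρ₁).PosSemidef :=
  (conjugate_nonneg_of_nonneg h₂.nonneg (CFC.sqrt_nonneg ρ₁)).posSemidef

theorem msqrt_inv_mul_sqrtProd {n : Type*} [Fintype n] [DecidableEq n] {ρ₁ ρ₂ : Matrix n n ℂ}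
    (h₁ : ρ₁.PosSemidef) (h₁inv : IsUnit ρ₁.det) (h₂ : ρ₂.PosSemidef) :
    (msqrt ρ₁)⁻¹ * sqrtProd ρ₁ ρ₂ =
      CFC.sqrt (CFC.sqrt ρ₁ * ρ₂ * CFC.sqrt ρ₁) * (CFC.sqrt ρ₁)⁻¹ := by
  rw [sqrtProd, msqrt_eq_sqrt h₁, msqrt_eq_sqrt (posSemidef_sqrt_mul_mul_sqrt h₂), mul_assoc,
    nonsing_inv_mul_cancel_left _ _ (isUnit_det_sqrt h₁ h₁inv)]

theorem opNorm_inv_sqrt_sqrtProd_inv_sqrt_general {d : ℕ}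
    {ρ₁ ρ₂ : Matrix (Fin d) (Fin d) ℂ}
    (h₁ : ρ₁.PosSemidef) (h₁t : ρ₁.trace = 1) (h₁inv : IsUnit ρ₁.det)
    (h₂ : ρ₂.PosSemidef) (h₂inv : IsUnit ρ₂.det) :
    ‖Matrix.toEuclideanCLM (𝕜 := ℂ)
        ((msqrt ρ₁)⁻¹ * sqrtProd ρ₁ ρ₂ * (msqrt ρ₂)⁻¹)‖ = 1 := by
  have : Nonempty (Fin d) := by
    refine Fin.pos_iff_nonempty.mp (Nat.pos_of_ne_zero ?_)
    rintro rfl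
    simp [trace] at h₁t
  rw [msqrt_inv_mul_sqrtProd h₁ h₁inv h₂, msqrt_eq_sqrt h₂]
  refine norm_toEuclideanCLM_of_mem_unitaryGroup (mem_unitaryGroup_of_mul_self_eq
    (CFC.sqrt_nonneg _).posSemidef.isHermitian (CFC.sqrt_nonneg _).posSemidef.isHermitian
    (CFC.sqrt_nonneg _).posSemidef.isHermitian (isUnit_det_sqrt h₁ h₁inv)
    (isUnit_det_sqrt h₂ h₂inv) ?_)
  rw [CFC.sqrt_mul_sqrt_self _ (posSemidef_sqrt_mul_mul_sqrt h₂).nonneg,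
    CFC.sqrt_mul_sqrt_self _ h₂.nonneg]

/-- For invertible density matrices `ρ₁`, `ρ₂`, the operator norm (largest singular
value) of `ρ₁^{−1/2} · √(ρ₁ρ₂) · ρ₂^{−1/2}` equals 1. -/
theorem opNorm_inv_sqrt_sqrtProd_inv_sqrt {d : ℕ}
    {ρ₁ ρ₂ : Matrix (Fin d) (Fin d) ℂ}
    (h₁ : ρ₁.PosSemidef) (h₁t : ρ₁.trace = 1) (h₁inv : IsUnit ρ₁.det)
    (h₂ : ρ₂.PosSemidef) (h₂t : ρ₂.trace = 1) (h₂inv : IsUnit ρ₂.det) :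
    ‖Matrix.toEuclideanCLM (𝕜 := ℂ)
        ((msqrt ρ₁)⁻¹ * sqrtProd ρ₁ ρ₂ * (msqrt ρ₂)⁻¹)‖ = 1 :=
  opNorm_inv_sqrt_sqrtProd_inv_sqrt_general h₁ h₁t h₁inv h₂ h₂inv
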